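/- arXiv:2601.04374 — 4 statements merged into one kernel-verified Lean document; each statement's English description precedes it below -/
import Mathlib

section
/- Let G be a finite group, M a G-module, and ω : G^n → M an n-cocycle with n ≥ 2 whose image generates a finite subgroup of M. Then there exists a short exact sequence of finite groups 1 → A → Γ → G → 1 with A abelian, and an (n−1)-cochain α of Γ in M, such that the pullback of ω along the projection π : Γ → G equals the coboundary δα. In particular, π*ω = 0 in H^n(Γ; M). -/
/-!
Induction on the degree. In degree two, `ω` is a factor set and the twisted product
`A ×_ω G`, with `(a, g) (b, h) = (a + g • b + ω(g, h), g h)`, is a finite extension of `G` by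
`A` in which `π*ω` is the coboundary of `(a, g) ↦ -a`. In higher degree, embed `A` into the
coinduced module `N = (G → A)`, with `G` acting by right translation, via `a ↦ (x ↦ x • a)`.
The image of `ω` in `N` is the coboundary of `β(g)(x) = ω(x, g)`, so the image of `β` in
`Q = N / A` is a cocycle of one degree less. An extension killing it also kills `ω`: lift its
primitive from `Q` to `N`, then the correction of `π*β` by the coboundary of the lift takes
values in `A` and is a primitive of `π*ω`. Finiteness of `Q` needs `A` finite, so `M` is first
replaced by the `G`-submodule generated by the values of `ω`.
-/

/-- The inhomogeneous group-cohomology coboundary operator, for a group `G`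
acting on an abelian group `V` via `ρ`. -/
def dd {G V : Type*} [Group G] [AddCommGroup V] (ρ : G → V → V) {n : ℕ}
    (f : (Fin n → G) → V) : (Fin (n + 1) → G) → V :=
  fun g => ρ (g 0) (f fun i => g i.succ) +
    ∑ j : Fin (n + 1), ((-1 : ℤ) ^ (j.val + 1)) • f (j.contractNth (· * ·) g)

open groupCohomology

theorem Fin.contractNth_comp {α β : Type*} (f : α → β) (opα : α → α → α) (opβ : β → β → β)
    (hf : ∀ a b, f (opα a b) = opβ (f a) (f b)) {n : ℕ} (j : Fin (n + 1)) (g : Fin (n + 1) → α) :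
    f ∘ Fin.contractNth j opα g = Fin.contractNth j opβ (f ∘ g) := by
  funext k
  simp only [Function.comp_apply, Fin.contractNth]
  split_ifs <;> simp only [hf]

theorem Fin.cons_contractNth {α : Type*} (op : α → α → α) {n : ℕ} (x : α)
    (j : Fin (n + 1)) (g : Fin (n + 1) → α) :
    Fin.cons x (Fin.contractNth j op g) = Fin.contractNth j.succ op (Fin.cons x g) := by
  funext k
  refine Fin.cases ?_ (fun i => ?_) k
  · rw [Fin.cons_zero, Fin.contractNth_apply_of_lt _ _ _ _ (by simp),
      Fin.castSucc_zero, Fin.cons_zero]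
  · rw [Fin.cons_succ]
    simp only [Fin.contractNth, Fin.val_succ, ← Fin.succ_castSucc, Fin.cons_succ]
    split_ifs <;> first | rfl | omega

theorem Fin.contractNth_zero_cons {α : Type*} (op : α → α → α) {n : ℕ} (x : α)
    (g : Fin (n + 1) → α) :
    Fin.contractNth 0 op (Fin.cons x g) = Fin.cons (op x (g 0)) (Fin.tail g) := by
  funext k
  refine Fin.cases ?_ (fun i => ?_) k
  · rw [Fin.contractNth_apply_of_eq _ _ _ _ rfl]; rfl
  · rw [Fin.contractNth_apply_of_gt _ _ _ _ (Nat.succ_pos _)]; rfl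

theorem dd_map {H G V W F : Type*} [Group H] [Group G] [AddCommGroup V] [AddCommGroup W]
    [FunLike F V W] [AddMonoidHomClass F V W]
    (f : H →* G) (φ : F) (ρ : G → V → V) (σ : H → W → W)
    (hφ : ∀ h v, φ (ρ (f h) v) = σ h (φ v)) {n : ℕ} (c : (Fin n → G) → V) :
    dd σ (fun g => φ (c (f ∘ g))) = fun g => φ (dd ρ c (f ∘ g)) := by
  funext g
  simp only [dd, map_add, map_sum, map_zsmul, Function.comp_apply, hφ]
  congr 2
  funext j
  rw [Fin.contractNth_comp f _ _ (map_mul f)]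

theorem dd_comp_coeff {G V W F : Type*} [Group G] [AddCommGroup V] [AddCommGroup W]
    [FunLike F V W] [AddMonoidHomClass F V W] (φ : F) (ρ : G → V → V) (σ : G → W → W)
    (hφ : ∀ g v, φ (ρ g v) = σ g (φ v)) {n : ℕ} (c : (Fin n → G) → V) :
    dd σ (fun g => φ (c g)) = fun g => φ (dd ρ c g) :=
  dd_map (MonoidHom.id G) φ ρ σ hφ c

theorem dd_sub {G V F : Type*} [Group G] [AddCommGroup V] [FunLike F V V]
    [AddMonoidHomClass F V V] (ρ : G → F) {n : ℕ} (c c' : (Fin n → G) → V) :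
    dd (fun g => ρ g) (c - c') = dd (fun g => ρ g) c - dd (fun g => ρ g) c' := by
  funext g
  simp only [dd, Pi.sub_apply, map_sub, smul_sub, Finset.sum_sub_distrib]
  abel

theorem dd_dd {G V : Type} [Group G] [AddCommGroup V] (ρ : Representation ℤ G V) {n : ℕ}
    (c : (Fin n → G) → V) : dd (fun g => ρ g) (dd (fun g => ρ g) c) = 0 :=
  congr(($(groupCohomology.inhomogeneousCochains.d_comp_d n (Rep.of ρ))).hom c)

theorem ρ_apply_eq_of_dd_eq_zero {G V : Type*} [Group G] [AddCommGroup V] {ρ : G → V → V} {n : ℕ}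
    {c : (Fin (n + 1) → G) → V} (hc : dd ρ c = 0) (x : G) (g : Fin (n + 1) → G) :
    ρ x (c g) = c (Fin.contractNth 0 (· * ·) (Fin.cons x g)) +
      ∑ j : Fin (n + 1),
        (-1 : ℤ) ^ (j.val + 1) • c (Fin.contractNth j.succ (· * ·) (Fin.cons x g)) := by
  have h := congrFun hc (Fin.cons x g)
  rw [dd, Fin.sum_univ_succ] at h
  simp only [Fin.cons_zero, Fin.cons_succ, Fin.val_succ, Fin.val_zero, pow_succ _ (_ + 1),
    mul_neg_one, neg_smul, Finset.sum_neg_distrib, zero_add, pow_one, one_smul,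
    Pi.zero_apply] at h
  rw [← sub_eq_zero, ← h]
  abel

theorem exists_dd_eq_of_exact {Γ N : Type} {A Q F₁ F₂ : Type*} [Group Γ] [AddCommGroup A]
    [AddCommGroup N] [AddCommGroup Q] [FunLike F₁ A N] [AddMonoidHomClass F₁ A N]
    [FunLike F₂ N Q] [AddMonoidHomClass F₂ N Q] {ρA : Γ → A → A} {ρN : Representation ℤ Γ N}
    {ρQ : Γ → Q → Q} {i : F₁} {p : F₂} (hi : Function.Injective i)
    (hp : Function.Surjective p) (hip : Function.Exact i p)
    (hiρ : ∀ g a, i (ρA g a) = ρN g (i a)) (hpρ : ∀ g x, p (ρN g x) = ρQ g (p x))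
    {k : ℕ} {ω : (Fin (k + 2) → Γ) → A} {β : (Fin (k + 1) → Γ) → N}
    (hβ : dd (fun g => ρN g) β = fun g => i (ω g))
    {α' : (Fin k → Γ) → Q} (hα' : (fun g => p (β g)) = dd ρQ α') :
    ∃ α, ω = dd ρA α := by
  set α'' := fun g => Function.surjInv hp (α' g)
  have hγ : ∀ g, p ((β - dd (fun g => ρN g) α'') g) = 0 := by
    intro g
    have := congrFun (dd_comp_coeff p _ _ hpρ α'') g
    simp only [α'', Function.surjInv_eq hp] at this
    rw [Pi.sub_apply, map_sub, ← this, ← hα', sub_self]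
  choose α hα using fun g => (hip _).1 (hγ g)
  refine ⟨α, funext fun g => hi ?_⟩
  calc i (ω g) = dd (fun g => ρN g) (β - dd (fun g => ρN g) α'') g := by
        rw [dd_sub, dd_dd, sub_zero, hβ]
    _ = i (dd ρA α g) := by
        rw [← funext hα, dd_comp_coeff i _ _ hiρ]

def IsKilledByFiniteAbelianExtension {G A : Type*} [Group G] [AddCommGroup A] (ρ : G → A → A)
    {n : ℕ} (ω : (Fin (n + 1) → G) → A) : Prop :=
  ∃ (Γ : Type) (_ : Group Γ) (_ : Finite Γ) (π : Γ →* G),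
    Function.Surjective π ∧ (∀ a b : π.ker, a * b = b * a) ∧
    ∃ α : (Fin n → Γ) → A, (fun g => ω fun i => π (g i)) = dd (fun γ => ρ (π γ)) α

theorem IsKilledByFiniteAbelianExtension.map {G G' A A' F : Type*} [Group G] [Group G']
    [AddCommGroup A] [AddCommGroup A'] [FunLike F A' A] [AddMonoidHomClass F A' A]
    {ρ : G → A → A} {ρ' : G' → A' → A'} (e : G' ≃* G) (φ : F)
    (hφ : ∀ g a, φ (ρ' g a) = ρ (e g) (φ a)) {n : ℕ} {ω : (Fin (n + 1) → G) → A}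
    {ω' : (Fin (n + 1) → G') → A'} (hω : ∀ g, ω (e ∘ g) = φ (ω' g))
    (h : IsKilledByFiniteAbelianExtension ρ' ω') : IsKilledByFiniteAbelianExtension ρ ω := by
  obtain ⟨Γ, hΓ, hΓfin, π, hπ, hker, α, hα⟩ := h
  have hmem : ∀ x : Γ, x ∈ (e.toMonoidHom.comp π).ker → x ∈ π.ker := fun x hx =>
    (MulEquiv.map_eq_one_iff e).1 hx
  refine ⟨Γ, hΓ, hΓfin, e.toMonoidHom.comp π, e.surjective.comp hπ, fun a b => ?_,
    fun g => φ (α g), ?_⟩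
  · have hab := congrArg Subtype.val (hker ⟨a, hmem a a.2⟩ ⟨b, hmem b b.2⟩)
    exact Subtype.ext hab
  · funext g
    have hdd := congrFun (dd_comp_coeff φ (fun γ => ρ' (π γ)) (fun γ => ρ (e (π γ)))
      (fun γ a => hφ (π γ) a) α) g
    rw [← congrFun hα g] at hdd
    exact (hω (π ∘ g)).trans hdd.symm

section TwistedProduct

variable {G A : Type} [Group G] [AddCommGroup A] {ρ : Representation ℤ G A}

def cocyclesOfDdEqZero (ω : (Fin 2 → G) → A) (hω : dd (fun g => ρ g) ω = 0) :
    cocycles₂ (Rep.of ρ) :=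
  ⟨fun g => ω ![g.1, g.2], (mem_cocycles₂_def _).2 fun g h j => by
    have e₀ : Fin.contractNth 0 (· * ·) ![g, h, j] = ![g * h, j] := by
      ext k; fin_cases k <;> rfl
    have e₁ : Fin.contractNth 1 (· * ·) ![g, h, j] = ![g, h * j] := by
      ext k; fin_cases k <;> rfl
    have e₂ : Fin.contractNth 2 (· * ·) ![g, h, j] = ![g, h] := by
      ext k; fin_cases k <;> rfl
    have e : (fun i : Fin 2 => ![g, h, j] i.succ) = ![h, j] := by
      ext k; fin_cases k <;> rfl
    have := congrFun hω ![g, h, j]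
    rw [dd, Fin.sum_univ_three] at this
    norm_num [e, e₀, e₁, e₂] at this
    rw [← this]
    abel⟩

def TwistedProduct (_f : cocycles₂ (Rep.of ρ)) : Type := A × G

namespace TwistedProduct

variable (f : cocycles₂ (Rep.of ρ))

instance : Mul (TwistedProduct f) := ⟨fun x y => (x.1 + ρ x.2 y.1 + f (x.2, y.2), x.2 * y.2)⟩

instance : One (TwistedProduct f) := ⟨(-f (1, 1), 1)⟩

instance : Inv (TwistedProduct f) := ⟨fun x => (-f (1, 1) - f (x.2⁻¹, x.2) - ρ x.2⁻¹ x.1, x.2⁻¹)⟩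

theorem mul_def (x y : TwistedProduct f) :
    x * y = (x.1 + ρ x.2 y.1 + f (x.2, y.2), x.2 * y.2) := rfl

instance : Group (TwistedProduct f) := Group.ofLeftAxioms
  (fun x y z => by
    refine Prod.ext ?_ (mul_assoc x.2 y.2 z.2)
    change x.1 + ρ x.2 y.1 + f (x.2, y.2) + ρ (x.2 * y.2) z.1 + f (x.2 * y.2, z.2)
      = x.1 + ρ x.2 (y.1 + ρ y.2 z.1 + f (y.2, z.2)) + f (x.2, y.2 * z.2)
    have h : f (x.2 * y.2, z.2) + f (x.2, y.2) = ρ x.2 (f (y.2, z.2)) + f (x.2, y.2 * z.2) :=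
      (mem_cocycles₂_iff _).1 f.2 x.2 y.2 z.2
    simp only [map_add, map_mul, Module.End.mul_apply]
    linear_combination (norm := module) h)
  (fun x => by
    refine Prod.ext ?_ (one_mul x.2)
    change -f (1, 1) + ρ 1 x.1 + f (1, x.2) = x.1
    simp only [map_one, Module.End.one_apply]
    rw [cocycles₂_map_one_fst f x.2]
    abel)
  (fun x => by
    refine Prod.ext ?_ (inv_mul_cancel x.2)
    change -f (1, 1) - f (x.2⁻¹, x.2) - ρ x.2⁻¹ x.1 + ρ x.2⁻¹ x.1 + f (x.2⁻¹, x.2) = -f (1, 1)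
    abel)

instance [Finite A] [Finite G] : Finite (TwistedProduct f) := inferInstanceAs (Finite (A × G))

def proj : TwistedProduct f →* G where
  toFun := Prod.snd
  map_one' := rfl
  map_mul' _ _ := rfl

theorem proj_apply (x : TwistedProduct f) : proj f x = x.2 := rfl

theorem proj_surjective : Function.Surjective (proj f) := fun g => ⟨(0, g), rfl⟩

theorem commute_of_mem_ker_proj (a b : (proj f).ker) : a * b = b * a := by
  have ha : (a : TwistedProduct f).2 = 1 := a.2
  have hb : (b : TwistedProduct f).2 = 1 := b.2
  refine Subtype.ext (Prod.ext ?_ ?_)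
  · change a.1.1 + ρ a.1.2 b.1.1 + f (a.1.2, b.1.2) = b.1.1 + ρ b.1.2 a.1.1 + f (b.1.2, a.1.2)
    simp only [ha, hb, map_one, Module.End.one_apply]
    abel
  · change a.1.2 * b.1.2 = b.1.2 * a.1.2
    rw [ha, hb]

theorem cocycle_proj_eq_dd :
    (fun g : Fin 2 → TwistedProduct f => f (proj f (g 0), proj f (g 1))) =
      dd (fun γ => ρ (proj f γ)) (fun γ => -(γ 0).1) := by
  funext g
  have c₀ : Fin.contractNth 0 (· * ·) g 0 = g 0 * g 1 := rfl
  have c₁ : Fin.contractNth 1 (· * ·) g 0 = g 0 := rfl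
  rw [dd, Fin.sum_univ_two, c₀, c₁, mul_def]
  simp only [proj_apply, Fin.val_zero, Fin.val_one, map_neg]
  norm_num
  abel

end TwistedProduct

theorem isKilledByFiniteAbelianExtension_of_degree_two [Finite G] [Finite A]
    (ω : (Fin 2 → G) → A) (hω : dd (fun g => ρ g) ω = 0) :
    IsKilledByFiniteAbelianExtension (fun g => ρ g) ω := by
  let f := cocyclesOfDdEqZero ω hω
  refine ⟨TwistedProduct f, inferInstance, inferInstance, TwistedProduct.proj f,
    TwistedProduct.proj_surjective f, TwistedProduct.commute_of_mem_ker_proj f,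
    fun γ => -(γ 0).1, ?_⟩
  rw [← TwistedProduct.cocycle_proj_eq_dd]
  funext g
  change ω _ = ω ![_, _]
  congr 1
  ext i
  fin_cases i <;> rfl

end TwistedProduct

section Coinduction

variable (G A : Type*) [Group G] [AddCommGroup A]

def rightRegular : Representation ℤ G (G → A) where
  toFun g := LinearMap.funLeft ℤ A (· * g)
  map_one' := by ext; simp
  map_mul' g h := by ext; simp [mul_assoc]

variable {G A}

@[simp]
theorem rightRegular_apply (g : G) (φ : G → A) (x : G) :
    rightRegular G A g φ x = φ (x * g) := rfl

def orbitMap (ρ : Representation ℤ G A) : A →ₗ[ℤ] G → A := LinearMap.pi fun x => ρ x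

theorem orbitMap_apply (ρ : Representation ℤ G A) (a : A) (x : G) : orbitMap ρ a x = ρ x a := rfl

theorem orbitMap_injective (ρ : Representation ℤ G A) : Function.Injective (orbitMap ρ) :=
  fun a b h => by simpa [orbitMap_apply] using congrFun h 1

theorem orbitMap_ρ_apply (ρ : Representation ℤ G A) (g : G) (a : A) :
    orbitMap ρ (ρ g a) = rightRegular G A g (orbitMap ρ a) := by
  ext x
  simp [orbitMap_apply]

def coindQuotient (ρ : Representation ℤ G A) :
    Representation ℤ G ((G → A) ⧸ LinearMap.range (orbitMap ρ)) :=
  (rightRegular G A).quotient _ fun g => by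
    rintro _ ⟨a, rfl⟩
    exact ⟨ρ g a, orbitMap_ρ_apply ρ g a⟩

theorem coindQuotient_mkQ (ρ : Representation ℤ G A) (g : G) (φ : G → A) :
    coindQuotient ρ g ((LinearMap.range (orbitMap ρ)).mkQ φ) =
      (LinearMap.range (orbitMap ρ)).mkQ (rightRegular G A g φ) := rfl

end Coinduction

section DimensionShift

variable {G A : Type*} [Group G] [AddCommGroup A]

def consCochain {n : ℕ} (ω : (Fin (n + 1) → G) → A) : (Fin n → G) → G → A :=
  fun g x => ω (Fin.cons x g)

theorem dd_consCochain {ρ : Representation ℤ G A} {n : ℕ} {ω : (Fin (n + 1) → G) → A}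
    (hω : dd (fun g => ρ g) ω = 0) :
    dd (fun g => rightRegular G A g) (consCochain ω) = fun g => orbitMap ρ (ω g) := by
  funext g x
  rw [orbitMap_apply, ρ_apply_eq_of_dd_eq_zero hω x g, Fin.contractNth_zero_cons]
  simp only [dd, Pi.add_apply, Finset.sum_apply, Pi.smul_apply, rightRegular_apply, consCochain,
    Fin.cons_contractNth]
  rfl

end DimensionShift

section Induction

variable {G A : Type} [Group G] [AddCommGroup A] {ρ : Representation ℤ G A}

theorem dd_mkQ_consCochain {n : ℕ} {ω : (Fin (n + 1) → G) → A}
    (hω : dd (fun g => ρ g) ω = 0) :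
    dd (fun g => coindQuotient ρ g)
      (fun g => (LinearMap.range (orbitMap ρ)).mkQ (consCochain ω g)) = 0 := by
  rw [dd_comp_coeff _ (fun g => rightRegular G A g) _
    (fun g φ => (coindQuotient_mkQ ρ g φ).symm), dd_consCochain hω]
  funext g
  exact (Submodule.Quotient.mk_eq_zero _).2 ⟨ω g, rfl⟩

theorem IsKilledByFiniteAbelianExtension.of_coindQuotient {n : ℕ} {ω : (Fin (n + 3) → G) → A}
    (hω : dd (fun g => ρ g) ω = 0)
    (h : IsKilledByFiniteAbelianExtension (fun g => coindQuotient ρ g)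
      (fun g => (LinearMap.range (orbitMap ρ)).mkQ (consCochain ω g))) :
    IsKilledByFiniteAbelianExtension (fun g => ρ g) ω := by
  obtain ⟨Γ, hΓ, hΓfin, π, hπ, hker, α', hα'⟩ := h
  have hβ := dd_map π (LinearMap.id (R := ℤ) (M := G → A)) (fun g => rightRegular G A g)
    (fun γ => (rightRegular G A).comp π γ) (fun _ _ => rfl) (consCochain ω)
  simp only [dd_consCochain hω, LinearMap.id_apply] at hβ
  exact ⟨Γ, hΓ, hΓfin, π, hπ, hker, exists_dd_eq_of_exact (ρN := (rightRegular G A).comp π)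
    (orbitMap_injective ρ) (Submodule.mkQ_surjective _) (LinearMap.exact_map_mkQ_range _)
    (fun g a => orbitMap_ρ_apply ρ (π g) a) (fun g φ => (coindQuotient_mkQ ρ (π g) φ).symm)
    hβ hα'⟩

end Induction

theorem isKilledByFiniteAbelianExtension_of_finite₀ {G A : Type} [Group G] [Finite G]
    [AddCommGroup A] [Finite A] (ρ : Representation ℤ G A) (n : ℕ) (ω : (Fin (n + 2) → G) → A)
    (hω : dd (fun g => ρ g) ω = 0) : IsKilledByFiniteAbelianExtension (fun g => ρ g) ω := by
  induction n generalizing A with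
  | zero => exact isKilledByFiniteAbelianExtension_of_degree_two ω hω
  | succ n ih =>
    have : Finite ((G → A) ⧸ LinearMap.range (orbitMap ρ)) :=
      Finite.of_surjective _ (Submodule.mkQ_surjective _)
    exact .of_coindQuotient hω (ih (coindQuotient ρ) _ (dd_mkQ_consCochain hω))

theorem isKilledByFiniteAbelianExtension_of_finite {G A : Type*} [Group G] [Finite G]
    [AddCommGroup A] [Finite A] (ρ : Representation ℤ G A) (n : ℕ) (ω : (Fin (n + 2) → G) → A)
    (hω : dd (fun g => ρ g) ω = 0) : IsKilledByFiniteAbelianExtension (fun g => ρ g) ω := by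
  -- `dd_dd` comes from Mathlib's cochain complex, which needs `G` and `A` in `Type`.
  let eG : Shrink.{0} G ≃* G := Shrink.mulEquiv
  let eA : Shrink.{0} A ≃ₗ[ℤ] A := Shrink.linearEquiv.{0} ℤ A
  let ρ' : Representation ℤ (Shrink.{0} G) (Shrink.{0} A) :=
    eA.symm.conjRingEquiv.toMonoidHom.comp (ρ.comp eG.toMonoidHom)
  have hρ' : ∀ g a, eA (ρ' g a) = ρ (eG g) (eA a) := fun g a => eA.apply_symm_apply _
  have hω' : dd (fun g => ρ' g) (fun g => eA.symm (ω (eG ∘ g))) = 0 := by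
    refine (dd_map eG.toMonoidHom eA.symm (fun g => ρ g) _ (fun g a => ?_) ω).trans ?_
    · simp [ρ', LinearEquiv.conjRingEquiv]
    · funext g
      simp [hω]
  exact IsKilledByFiniteAbelianExtension.map eG eA hρ' (fun g => (eA.apply_symm_apply _).symm)
    (isKilledByFiniteAbelianExtension_of_finite₀ ρ' n _ hω')

theorem smul_mem_closure_range_of_dd_eq_zero {G M : Type*} [Group G] [AddCommGroup M]
    [DistribMulAction G M] {n : ℕ} {ω : (Fin (n + 1) → G) → M}
    (hω : dd (fun (g : G) (m : M) => g • m) ω = 0) (g : G) {m : M}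
    (hm : m ∈ AddSubgroup.closure (Set.range ω)) : g • m ∈ AddSubgroup.closure (Set.range ω) := by
  set C := AddSubgroup.closure (Set.range ω)
  have hω_mem : ∀ t, ω t ∈ C := fun t => AddSubgroup.subset_closure ⟨t, rfl⟩
  refine (AddSubgroup.closure_le (K := C.comap (DistribSMul.toAddMonoidHom M g))).2 ?_ hm
  rintro _ ⟨t, rfl⟩
  change g • ω t ∈ C
  rw [ρ_apply_eq_of_dd_eq_zero hω g t]
  exact add_mem (hω_mem _) (sum_mem fun j _ => zsmul_mem (hω_mem _) _)

/-- a finite-image-generated `n`-cocycle (`n = n' + 2 ≥ 2`) of a finite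
group `G` in a `G`-module `M` pulls back to a coboundary along a surjection from a finite
group `Γ` which is an extension of `G` by an abelian kernel. -/
theorem stmt0 {G M : Type*} [Group G] [Finite G] [AddCommGroup M] [DistribMulAction G M]
    (n : ℕ) (ω : (Fin (n + 2) → G) → M)
    (hω : dd (fun (g : G) (m : M) => g • m) ω = 0)
    (hfin : (AddSubgroup.closure (Set.range ω) : Set M).Finite) :
    ∃ (Γ : Type) (_ : Group Γ) (_ : Finite Γ) (π : Γ →* G),
      Function.Surjective π ∧
      (∀ a b : π.ker, a * b = b * a) ∧
      ∃ α : (Fin (n + 1) → Γ) → M,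
        (fun g : Fin (n + 2) → Γ => ω fun i => π (g i)) =
          dd (fun (γ : Γ) (m : M) => π γ • m) α := by
  let C := (AddSubgroup.closure (Set.range ω)).toIntSubmodule
  have : Finite C := hfin.to_subtype
  let ρC := (Representation.ofDistribMulAction ℤ G M).subrepresentation C
    fun g _ => smul_mem_closure_range_of_dd_eq_zero hω g
  let ωC : (Fin (n + 2) → G) → C := fun g => ⟨ω g, AddSubgroup.subset_closure ⟨g, rfl⟩⟩
  have hωC : dd (fun g => ρC g) ωC = 0 := by
    refine funext fun g => Subtype.val_injective ?_
    have := congrFun (dd_comp_coeff C.subtype (fun g => ρC g) (fun g m => g • m)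
      (fun _ _ => rfl) ωC) g
    exact this.symm.trans (congrFun hω g)
  exact IsKilledByFiniteAbelianExtension.map (MulEquiv.refl G) C.subtype (fun _ _ => rfl)
    (fun _ => rfl) (isKilledByFiniteAbelianExtension_of_finite ρC n ωC hωC)
end

section
/- Let G be a finite group and M a G-module that is torsion as an abelian group. Then for any n ≥ 2, every n-cocycle of G with coefficients in M becomes a coboundary after pulling back along some surjection Γ → G where Γ is a finite group that is an extension of G by a finite abelian group. -/
universe u v w

open groupCohomology

local notation "∂" => dd (fun g m => g • m)

section Cochains

variable {G Γ V W : Type*} [Group G] [Group Γ] [AddCommGroup V] [AddCommGroup W]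

theorem map_dd {F : Type*} [FunLike F V W] [AddMonoidHomClass F V W] (ρV : G → V → V)
    (ρW : G → W → W) (φ : F) (hφ : ∀ g v, φ (ρV g v) = ρW g (φ v)) {n : ℕ}
    (f : (Fin n → G) → V) :
    (fun g => φ (dd ρV f g)) = dd ρW (fun t => φ (f t)) := by
  funext g
  simp only [dd, map_add, map_sum, map_zsmul, hφ]

theorem dd_inflate (ρ : G → V → V) (π : Γ →* G) {n : ℕ} (f : (Fin n → G) → V)
    (g : Fin (n + 1) → Γ) :
    dd (fun γ v => ρ (π γ) v) (fun t => f fun i => π (t i)) g = dd ρ f fun i => π (g i) := by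
  have hπ (j : Fin (n + 1)) : Fin.contractNth j (· * ·) (fun i => π (g i)) =
      fun i => π (Fin.contractNth j (· * ·) g i) :=
    (Fin.comp_contractNth (· * ·) (· * ·) (map_mul π) j g).symm
  simp only [dd, hπ]

theorem dd_sub_s1 (ρ : G → V → V) (hρ : ∀ g u v, ρ g (u + v) = ρ g u + ρ g v) {n : ℕ}
    (f f' : (Fin n → G) → V) : dd ρ (f - f') = dd ρ f - dd ρ f' := by
  have hρ_sub : ∀ g u v, ρ g (u - v) = ρ g u - ρ g v :=
    fun g => (AddMonoidHom.mk' _ (hρ g)).map_sub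
  funext g
  simp only [dd, Pi.sub_apply, hρ_sub, smul_sub, Finset.sum_sub_distrib]
  abel

theorem dd_apply_one (ρ : G → V → V) (f : (Fin 1 → G) → V) (g : Fin 2 → G) :
    dd ρ f g = ρ (g 0) (f ![g 1]) - f ![g 0 * g 1] + f ![g 0] := by
  have e : (fun i : Fin 1 => g i.succ) = ![g 1] := by ext i; fin_cases i; rfl
  have e₀ : Fin.contractNth 0 (· * ·) g = ![g 0 * g 1] := by ext i; fin_cases i; rfl
  have e₁ : Fin.contractNth 1 (· * ·) g = ![g 0] := by ext i; fin_cases i; rfl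
  rw [dd, Fin.sum_univ_two, e, e₀, e₁]
  simp only [Fin.val_zero, Fin.val_one, Nat.reduceAdd, Int.reducePow]
  abel

theorem dd_apply_two (ρ : G → V → V) (f : (Fin 2 → G) → V) (g : Fin 3 → G) :
    dd ρ f g = ρ (g 0) (f ![g 1, g 2]) - f ![g 0 * g 1, g 2] + f ![g 0, g 1 * g 2]
      - f ![g 0, g 1] := by
  have e : (fun i : Fin 2 => g i.succ) = ![g 1, g 2] := by ext i; fin_cases i <;> rfl
  have e₀ : Fin.contractNth 0 (· * ·) g = ![g 0 * g 1, g 2] := by ext i; fin_cases i <;> rfl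
  have e₁ : Fin.contractNth 1 (· * ·) g = ![g 0, g 1 * g 2] := by ext i; fin_cases i <;> rfl
  have e₂ : Fin.contractNth 2 (· * ·) g = ![g 0, g 1] := by ext i; fin_cases i <;> rfl
  rw [dd, Fin.sum_univ_three, e, e₀, e₁, e₂]
  simp only [Fin.val_zero, Fin.val_one, Fin.val_two, Nat.reduceAdd, Int.reducePow]
  abel

variable [DistribMulAction G V] [DistribMulAction G W]

theorem dd_map_eq_zero (φ : V →+[G] W) {n : ℕ} {f : (Fin n → G) → V} (hf : ∂ f = 0) :
    ∂ (fun t => φ (f t)) = 0 := by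
  funext g
  rw [← congrFun (map_dd _ _ φ (map_smul φ) f) g, hf, Pi.zero_apply, map_zero, Pi.zero_apply]

theorem dd_eq_zero_of_injective (φ : V →+[G] W) (hφ : Function.Injective φ) {n : ℕ}
    {f : (Fin n → G) → V} (hf : ∂ (fun t => φ (f t)) = 0) : ∂ f = 0 := by
  funext g
  apply hφ
  rw [congrFun (map_dd _ _ φ (map_smul φ) f) g, Pi.zero_apply, map_zero]
  exact congrFun hf g

/-- Mathlib's complex of inhomogeneous cochains needs `G` and `V` in the same universe as `ℤ`,
so `V` is first shrunk to `Type`. -/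
theorem dd_dd_s1 {G : Type} [Group G] [DistribMulAction G V] [Small.{0} V] {n : ℕ}
    (f : (Fin n → G) → V) : ∂ (∂ f) = 0 := by
  let e : Shrink.{0} V ≃+ V := Shrink.addEquiv
  have he : ∀ (g : G) x, e (g • x) = g • e x := equivShrink_symm_smul
  let _ : DistribMulAction G (Shrink.{0} V) := e.injective.distribMulAction e.toAddMonoidHom he
  let eG : Shrink.{0} V →+[G] V := { e.toAddMonoidHom with map_smul' := he }
  have hf : f = fun t => eG (e.symm (f t)) := funext fun t => (e.apply_symm_apply (f t)).symm
  have h := inhomogeneousCochains.d_comp_d n (Rep.ofDistribMulAction ℤ G (Shrink.{0} V))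
  have h' : ∂ (∂ fun t => e.symm (f t)) = 0 := by
    have h2 := LinearMap.ext_iff.1 (ModuleCat.hom_ext_iff.1 h) fun t => e.symm (f t)
    funext g
    exact congrFun h2 g
  funext g
  rw [hf, ← map_dd _ _ eG (map_smul eG), ← congrFun (map_dd _ _ eG (map_smul eG) _) g, h',
    Pi.zero_apply, map_zero, Pi.zero_apply]

end Cochains

namespace Fin

variable {α : Type*} (op : α → α → α)

theorem contractNth_zero_cons_s1 {m : ℕ} (x : α) (g : Fin (m + 1) → α) :
    contractNth 0 op (cons x g) = cons (op x (g 0)) (tail g) := by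
  funext t
  refine Fin.cases ?_ (fun s => ?_) t
  · rw [contractNth_apply_of_eq _ _ _ _ rfl]
    simp
  · rw [contractNth_apply_of_gt _ _ _ _ (by simp), cons_succ, cons_succ, tail]

theorem contractNth_succ_cons {m : ℕ} (x : α) (g : Fin (m + 1) → α) (j : Fin (m + 1)) :
    contractNth j.succ op (cons x g) = cons x (contractNth j op g) := by
  funext t
  refine Fin.cases ?_ (fun s => ?_) t
  · rw [contractNth_apply_of_lt _ _ _ _ (by simp)]
    simp
  · rw [cons_succ]
    rcases lt_trichotomy (s : ℕ) j with h | h | h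
    · rw [contractNth_apply_of_lt _ _ _ _ h, contractNth_apply_of_lt _ _ _ _ (by simpa using h),
        show s.succ.castSucc = s.castSucc.succ from rfl, cons_succ]
    · rw [contractNth_apply_of_eq _ _ _ _ h, contractNth_apply_of_eq _ _ _ _ (by simpa using h),
        show s.succ.castSucc = s.castSucc.succ from rfl, cons_succ, cons_succ]
    · rw [contractNth_apply_of_gt _ _ _ _ h, contractNth_apply_of_gt _ _ _ _ (by simpa using h),
        cons_succ]

end Fin

def InflatesToCoboundary {G V : Type*} [Group G] [AddCommGroup V] [DistribMulAction G V]
    {n : ℕ} (ω : (Fin (n + 1) → G) → V) : Prop :=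
  ∃ (Γ : Type) (_ : Group Γ) (_ : Finite Γ) (π : Γ →* G), Function.Surjective π ∧
    (∀ a b : π.ker, a * b = b * a) ∧
    ∃ α : (Fin n → Γ) → V,
      (fun g : Fin (n + 1) → Γ => ω fun i => π (g i)) = dd (fun (γ : Γ) (m : V) => π γ • m) α

namespace InflatesToCoboundary

variable {G V W : Type*} [Group G] [AddCommGroup V] [AddCommGroup W]
  [DistribMulAction G V] [DistribMulAction G W] {n : ℕ}

theorem of_extension {ω : (Fin (n + 1) → G) → V} {Γ : Type*} [Group Γ] [Finite Γ]
    (π : Γ →* G) (hπ : Function.Surjective π) (hker : ∀ a b : π.ker, a * b = b * a)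
    (α : (Fin n → Γ) → V)
    (hα : (fun g : Fin (n + 1) → Γ => ω fun i => π (g i)) = dd (fun γ m => π γ • m) α) :
    InflatesToCoboundary ω := by
  let e : Shrink.{0} Γ ≃* Γ := Shrink.mulEquiv
  refine ⟨Shrink.{0} Γ, inferInstance, .of_equiv Γ e.symm.toEquiv, π.comp e.toMonoidHom,
    hπ.comp e.surjective, ?_, fun t => α fun i => e (t i), ?_⟩
  · rintro ⟨a, ha⟩ ⟨b, hb⟩
    have hab := congrArg Subtype.val (hker ⟨e a, ha⟩ ⟨e b, hb⟩)
    apply Subtype.ext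
    apply e.injective
    simpa only [Subgroup.coe_mul, map_mul] using hab
  · funext g
    exact (congrFun hα _).trans (dd_inflate _ e.toMonoidHom α g).symm

theorem map (φ : V →+[G] W) {ω : (Fin (n + 1) → G) → V} (h : InflatesToCoboundary ω) :
    InflatesToCoboundary fun t => φ (ω t) := by
  obtain ⟨Γ, hΓ, hfin, π, hπ, hker, α, hα⟩ := h
  refine ⟨Γ, hΓ, hfin, π, hπ, hker, fun t => φ (α t), ?_⟩
  rw [← map_dd _ _ φ (fun γ => map_smul φ (π γ)), ← hα]

end InflatesToCoboundary

def CocycleExtension {G A : Type*} (_f : G × G → A) : Type _ := A × G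

namespace CocycleExtension

variable {G A : Type*} [Group G] [AddCommGroup A] [DistribMulAction G A] (f : G × G → A)

instance : Mul (CocycleExtension f) :=
  ⟨fun x y => (x.1 + x.2 • y.1 + f (x.2, y.2), x.2 * y.2)⟩

instance : One (CocycleExtension f) := ⟨(-f (1, 1), 1)⟩

instance : Inv (CocycleExtension f) :=
  ⟨fun x => (-f (1, 1) - f (x.2⁻¹, x.2) - x.2⁻¹ • x.1, x.2⁻¹)⟩

instance [Finite G] [Finite A] : Finite (CocycleExtension f) :=
  inferInstanceAs (Finite (A × G))

theorem fst_mul (x y : CocycleExtension f) : (x * y).1 = x.1 + x.2 • y.1 + f (x.2, y.2) :=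
  rfl

variable [hf : Fact (IsCocycle₂ f)]

instance : Group (CocycleExtension f) where
  mul_assoc x y z := by
    refine Prod.ext ?_ (mul_assoc x.2 y.2 z.2)
    show x.1 + x.2 • y.1 + f (x.2, y.2) + (x.2 * y.2) • z.1 + f (x.2 * y.2, z.2)
      = x.1 + x.2 • (y.1 + y.2 • z.1 + f (y.2, z.2)) + f (x.2, y.2 * z.2)
    rw [mul_smul, smul_add, smul_add, eq_sub_of_add_eq (hf.out x.2 y.2 z.2)]
    abel
  one_mul x := by
    refine Prod.ext ?_ (one_mul x.2)
    show -f (1, 1) + (1 : G) • x.1 + f (1, x.2) = x.1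
    rw [one_smul, map_one_fst_of_isCocycle₂ hf.out x.2]
    abel
  mul_one x := by
    refine Prod.ext ?_ (mul_one x.2)
    show x.1 + x.2 • -f (1, 1) + f (x.2, 1) = x.1
    rw [smul_neg, map_one_snd_of_isCocycle₂ hf.out x.2]
    abel
  inv_mul_cancel x := by
    refine Prod.ext ?_ (inv_mul_cancel x.2)
    show -f (1, 1) - f (x.2⁻¹, x.2) - x.2⁻¹ • x.1 + x.2⁻¹ • x.1 + f (x.2⁻¹, x.2) = -f (1, 1)
    abel

def proj : CocycleExtension f →* G where
  toFun x := x.2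
  map_one' := rfl
  map_mul' _ _ := rfl

theorem proj_surjective : Function.Surjective (proj f) := fun g => ⟨(0, g), rfl⟩

theorem ker_proj_commute (a b : (proj f).ker) : a * b = b * a := by
  obtain ⟨⟨a, g⟩, hg : g = 1⟩ := a
  obtain ⟨⟨b, h⟩, hh : h = 1⟩ := b
  subst hg hh
  refine Subtype.ext (Prod.ext ?_ rfl)
  show a + (1 : G) • b + f (1, 1) = b + (1 : G) • a + f (1, 1)
  rw [one_smul, one_smul, add_comm a b]

end CocycleExtension

section TwoCocycles

variable {G V : Type*} [Group G] [AddCommGroup V] [DistribMulAction G V]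

theorem isCocycle₂_of_dd_eq_zero {σ : (Fin 2 → G) → V} (hσ : ∂ σ = 0) :
    IsCocycle₂ fun p : G × G => σ ![p.1, p.2] := by
  intro g h j
  have H := congrFun hσ ![g, h, j]
  rw [dd_apply_two] at H
  simp only [Matrix.cons_val_zero, Matrix.cons_val_one, Matrix.cons_val_two, Matrix.head_cons,
    Matrix.tail_cons, Pi.zero_apply] at H
  rw [eq_comm, ← sub_eq_zero, ← H]
  abel

theorem InflatesToCoboundary.of_dd_eq_zero_two [Finite G] [Finite V]
    {σ : (Fin 2 → G) → V} (hσ : ∂ σ = 0) : InflatesToCoboundary σ := by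
  let f : G × G → V := fun p => σ ![p.1, p.2]
  have : Fact (IsCocycle₂ f) := ⟨isCocycle₂_of_dd_eq_zero hσ⟩
  refine .of_extension (CocycleExtension.proj f) (CocycleExtension.proj_surjective f)
    (CocycleExtension.ker_proj_commute f) (fun t => -(t 0).1) (funext fun g => ?_)
  have hg : (fun i => CocycleExtension.proj f (g i)) = ![(g 0).2, (g 1).2] := by
    ext i; fin_cases i <;> rfl
  rw [dd_apply_one, hg]
  show f ((g 0).2, (g 1).2) = (g 0).2 • -(g 1).1 - -(g 0 * g 1).1 + -(g 0).1
  rw [CocycleExtension.fst_mul, smul_neg]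
  abel

end TwoCocycles

def CoInd (G V : Type*) : Type _ := G → V

namespace CoInd

variable {G V : Type*}

instance [Mul G] : SMul G (CoInd G V) := ⟨fun g f x => f (x * g)⟩

theorem smul_apply [Mul G] (g : G) (f : CoInd G V) (x : G) : (g • f) x = f (x * g) := rfl

section AddCommGroup

variable [AddCommGroup V]

instance : AddCommGroup (CoInd G V) := Pi.addCommGroup

theorem add_apply (f f' : CoInd G V) (x : G) : (f + f') x = f x + f' x := rfl

theorem zero_apply (x : G) : (0 : CoInd G V) x = 0 := rfl

theorem zsmul_apply (c : ℤ) (f : CoInd G V) (x : G) : (c • f) x = c • f x := rfl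

theorem sum_apply {ι : Type*} (s : Finset ι) (F : ι → CoInd G V) (x : G) :
    (∑ i ∈ s, F i) x = ∑ i ∈ s, F i x :=
  Finset.sum_apply x s F

instance [Finite G] [Finite V] : Finite (CoInd G V) := Pi.finite

end AddCommGroup

variable [Group G] [AddCommGroup V]

instance : DistribMulAction G (CoInd G V) where
  one_smul f := funext fun x => by rw [smul_apply, mul_one]
  mul_smul g h f := funext fun x => by simp only [smul_apply, mul_assoc]
  smul_add _ _ _ := rfl
  smul_zero _ := rfl

theorem exists_dd_eq {k : ℕ} (f : (Fin (k + 1) → G) → CoInd G V) (hf : ∂ f = 0) :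
    ∃ h : (Fin k → G) → CoInd G V, ∂ h = f := by
  -- `∂ h = f` at `(g, x)` is the cocycle identity of `f` at `x :: g`, evaluated at `1`.
  refine ⟨fun g x => f (Fin.cons x g) 1, funext fun g => funext fun x => ?_⟩
  have H := congrFun (congrFun hf (Fin.cons x g)) 1
  have hsign : ∀ j : ℕ, (-1 : ℤ) ^ (j + 1 + 1) = -((-1) ^ (j + 1)) := fun j => by ring
  simp only [dd, add_apply, sum_apply, zsmul_apply, smul_apply, Pi.zero_apply, zero_apply,
    Fin.cons_zero, Fin.cons_succ, one_mul] at H ⊢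
  rw [Fin.sum_univ_succ] at H
  simp only [Fin.contractNth_zero_cons_s1, Fin.contractNth_succ_cons, Fin.val_succ,
    Fin.val_zero, zero_add, pow_one, hsign, neg_smul, one_zsmul, Finset.sum_neg_distrib] at H
  rw [← neg_add, ← sub_eq_add_neg] at H
  exact (sub_eq_zero.mp H).symm

variable [DistribMulAction G V]

variable (G V) in
def ι : V →+[G] CoInd G V where
  toFun v x := x • v
  map_smul' g v := funext fun x => (mul_smul x g v).symm
  map_zero' := funext fun x => smul_zero x
  map_add' u v := funext fun x => smul_add x u v

theorem ι_apply (v : V) (x : G) : ι G V v x = x • v := rfl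

theorem ι_injective : Function.Injective (ι G V) := fun u v h => by
  simpa only [ι_apply, one_smul] using congrFun h 1

variable (G V)

def rangeCon : ModuleCon G (CoInd G V) where
  toAddCon := QuotientAddGroup.con (ι G V).toAddMonoidHom.range
  smul g c d h := by
    obtain ⟨v, hv⟩ := QuotientAddGroup.leftRel_apply.1 h
    refine QuotientAddGroup.leftRel_apply.2 ⟨g • v, ?_⟩
    change ι G V v = -c + d at hv
    change ι G V (g • v) = -(g • c) + g • d
    rw [map_smul, hv, smul_add, smul_neg]

abbrev Coker := (rangeCon G V).Quotient

def mkQ : CoInd G V →+[G] Coker G V where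
  toFun := (rangeCon G V).mk'
  map_smul' _ _ := rfl
  map_zero' := rfl
  map_add' _ _ := rfl

variable {G V}

theorem mkQ_surjective : Function.Surjective (mkQ G V) := Quotient.mk''_surjective

theorem exists_ι_eq_of_mkQ_eq_zero (c : CoInd G V) (hc : mkQ G V c = 0) :
    ∃ v, ι G V v = c := by
  obtain ⟨v, hv⟩ := QuotientAddGroup.leftRel_apply.1 ((rangeCon G V).toAddCon.eq.1 hc)
  refine ⟨-v, ?_⟩
  change ι G V v = -c + 0 at hv
  rw [map_neg, hv, add_zero, neg_neg]

instance [Finite G] [Finite V] : Finite (Coker G V) := Quotient.finite _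

theorem mkQ_ι (v : V) : mkQ G V (ι G V v) = 0 :=
  (rangeCon G V).toAddCon.eq.2 (QuotientAddGroup.leftRel_apply.2 ⟨-v, by
    change ι G V (-v) = -ι G V v + 0
    rw [map_neg, add_zero]⟩)

end CoInd

theorem InflatesToCoboundary.of_exact {G V C Q : Type*} [Group G] [AddCommGroup V]
    [AddCommGroup C] [AddCommGroup Q] [DistribMulAction G V] [DistribMulAction G C]
    [DistribMulAction G Q] [Small.{0} C] (ι : V →+[G] C) (hι : Function.Injective ι)
    (q : C →+[G] Q) (hq : Function.Surjective q) (hexact : ∀ c, q c = 0 → ∃ v, ι v = c) {n : ℕ}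
    {ω : (Fin (n + 2) → G) → V} (β : (Fin (n + 1) → G) → C) (hβ : ∂ β = fun t => ι (ω t))
    (h : InflatesToCoboundary fun t => q (β t)) : InflatesToCoboundary ω := by
  obtain ⟨Γ, hΓ, hfin, π, hπ, hker, αQ, hαQ⟩ := h
  refine ⟨Γ, hΓ, hfin, π, hπ, hker, ?_⟩
  choose lift hlift using fun t => hq (αQ t)
  -- `δ` dies in `Q`, so it comes from `V`; as `∂ ∘ ∂ = 0`, `∂ δ` is the inflation of `ι ∘ ω`.
  let δ := (fun t : Fin (n + 1) → Γ => β fun i => π (t i)) - dd (fun γ c => π γ • c) lift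
  have hδ : ∀ t, q (δ t) = 0 := by
    intro t
    have hqlift := congrFun (map_dd _ _ q (fun γ => map_smul q (π γ)) lift) t
    simp only [δ, Pi.sub_apply, map_sub, hqlift, hlift]
    exact sub_eq_zero.2 (congrFun hαQ t)
  choose ε hε using fun t => hexact _ (hδ t)
  refine ⟨ε, funext fun t => hι ?_⟩
  have hdd : dd (fun γ c => π γ • c) (dd (fun γ c => π γ • c) lift) = 0 := by
    let _ := DistribMulAction.compHom C π
    exact dd_dd_s1 lift
  calc ι (ω fun i => π (t i))
      = dd (fun γ c => π γ • c) (fun s => β fun i => π (s i)) t :=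
        (congrFun hβ _).symm.trans (dd_inflate _ π β t).symm
    _ = dd (fun γ c => π γ • c) δ t := by
        rw [dd_sub_s1 _ (fun γ => smul_add (π γ)), hdd, sub_zero]
    _ = ι (dd (fun γ v => π γ • v) ε t) := by
        rw [congrFun (map_dd _ _ ι (fun γ => map_smul ι (π γ)) ε) t, funext hε]

/-- `V` lives in a universe above that of `G`, so that `CoInd G V = (G → V)` stays there along
the induction. -/
theorem InflatesToCoboundary.of_dd_eq_zero' {G : Type u} [Group G] [Finite G] {n : ℕ}
    {V : Type (max u w)} [AddCommGroup V] [DistribMulAction G V] [Finite V]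
    {ω : (Fin (n + 2) → G) → V} (hω : ∂ ω = 0) : InflatesToCoboundary ω := by
  induction n generalizing V with
  | zero => exact .of_dd_eq_zero_two hω
  | succ n ih =>
    obtain ⟨β, hβ⟩ := CoInd.exists_dd_eq _ (dd_map_eq_zero (CoInd.ι G V) hω)
    have hβQ : ∂ (fun t => CoInd.mkQ G V (β t)) = 0 := by
      funext g
      rw [← congrFun (map_dd _ _ _ (map_smul (CoInd.mkQ G V)) β) g, hβ, CoInd.mkQ_ι,
        Pi.zero_apply]
    exact .of_exact (CoInd.ι G V) CoInd.ι_injective (CoInd.mkQ G V) CoInd.mkQ_surjective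
      CoInd.exists_ι_eq_of_mkQ_eq_zero β hβ (ih hβQ)

theorem InflatesToCoboundary.of_dd_eq_zero {G : Type u} {V : Type v} [Group G] [Finite G]
    [AddCommGroup V] [DistribMulAction G V] [Finite V] {n : ℕ} {ω : (Fin (n + 2) → G) → V}
    (hω : ∂ ω = 0) : InflatesToCoboundary ω := by
  let e : ULift.{u} V →+[G] V :=
    { AddEquiv.ulift.toAddMonoidHom with map_smul' := fun _ _ => rfl }
  exact (of_dd_eq_zero' (dd_eq_zero_of_injective e ULift.down_injective hω)).map e

namespace AddSubgroup

variable (G : Type*) {M : Type*} [Group G] [AddCommGroup M] [DistribMulAction G M]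

def stableClosure (s : Set M) : AddSubgroup M := closure (⋃ x ∈ s, MulAction.orbit G x)

variable {G}

theorem subset_stableClosure {s : Set M} : s ⊆ stableClosure G s := fun x hx =>
  subset_closure (Set.mem_biUnion hx (MulAction.mem_orbit_self x))

theorem smul_mem_stableClosure {s : Set M} (g : G) {m : M} (hm : m ∈ stableClosure G s) :
    g • m ∈ stableClosure G s := by
  induction hm using closure_induction with
  | mem y hy =>
    obtain ⟨x, hx, hy⟩ := Set.mem_iUnion₂.1 hy
    exact subset_closure (Set.mem_biUnion hx (MulAction.mem_orbit_of_mem_orbit g hy))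
  | zero => simp
  | add y z _ _ hy hz => simpa only [smul_add] using add_mem hy hz
  | neg y _ hy => simpa only [smul_neg] using neg_mem hy

instance (s : Set M) : SMul G (stableClosure G s) :=
  ⟨fun g m => ⟨g • m, smul_mem_stableClosure g m.2⟩⟩

instance (s : Set M) : DistribMulAction G (stableClosure G s) :=
  Subtype.val_injective.distribMulAction (stableClosure G s).subtype fun _ _ => rfl

theorem finite_stableClosure [Finite G] (hM : IsAddTorsion M) {s : Set M} (hs : s.Finite) :
    Finite (stableClosure G s) := by
  have : Finite (⋃ x ∈ s, MulAction.orbit G x) :=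
    hs.biUnion fun x _ => Finite.finite_mulAction_orbit x
  have : AddGroup.FG (stableClosure G s) := AddGroup.closure_finite_fg _
  exact AddCommGroup.finite_of_fg_isAddTorsion _ (hM.addSubgroup _)

end AddSubgroup

/-- if `M` is torsion as an abelian group, every `n`-cocycle of the finite
group `G` in `M` (`n = n' + 2 ≥ 2`) becomes a coboundary after pulling back along some
surjection `Γ → G` with `Γ` a finite extension of `G` by a finite abelian kernel. -/
theorem stmt1 {G M : Type*} [Group G] [Finite G] [AddCommGroup M] [DistribMulAction G M]
    (htors : ∀ m : M, ∃ k : ℕ, 0 < k ∧ k • m = 0)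
    (n : ℕ) (ω : (Fin (n + 2) → G) → M)
    (hω : dd (fun (g : G) (m : M) => g • m) ω = 0) :
    ∃ (Γ : Type) (_ : Group Γ) (_ : Finite Γ) (π : Γ →* G),
      Function.Surjective π ∧
      (∀ a b : π.ker, a * b = b * a) ∧
      ∃ α : (Fin (n + 1) → Γ) → M,
        (fun g : Fin (n + 2) → Γ => ω fun i => π (g i)) =
          dd (fun (γ : Γ) (m : M) => π γ • m) α := by
  let A := AddSubgroup.stableClosure G (Set.range ω)
  have : Finite A := AddSubgroup.finite_stableClosure
    (fun m => isOfFinAddOrder_iff_nsmul_eq_zero.2 (htors m)) (Set.finite_range ω)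
  let φ : A →+[G] M := { A.subtype with map_smul' := fun _ _ => rfl }
  let ωA : (Fin (n + 2) → G) → A :=
    fun t => ⟨ω t, AddSubgroup.subset_stableClosure (Set.mem_range_self t)⟩
  have hωA : ∂ ωA = 0 := dd_eq_zero_of_injective φ Subtype.val_injective hω
  exact (InflatesToCoboundary.of_dd_eq_zero hωA).map φ
end

section
/- Let G be a group and let 𝒜 be the free abelian group on symbols ×_{g,h} for g,h ∈ G with g ≠ 1 and h ≠ 1 (setting ×_{1,g} = ×_{g,1} = 0). Then the formula g · ×_{h,k} = ×_{gh,k} − ×_{g,hk} + ×_{g,h} defines an action of G on 𝒜 by group automorphisms. -/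
/-- The free abelian group on symbols `×_{g,h}` with `g ≠ 1` and `h ≠ 1`. -/
def Asymb (G : Type*) [Group G] : Type _ :=
  ({p : G × G // p.1 ≠ 1 ∧ p.2 ≠ 1} →₀ ℤ)

noncomputable instance {G : Type*} [Group G] : AddCommGroup (Asymb G) :=
  inferInstanceAs (AddCommGroup ({p : G × G // p.1 ≠ 1 ∧ p.2 ≠ 1} →₀ ℤ))

/-- The symbol `×_{g,h}`, set equal to `0` whenever `g = 1` or `h = 1`. -/
noncomputable def X {G : Type*} [Group G] [DecidableEq G] (g h : G) : Asymb G :=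
  if hp : g ≠ 1 ∧ h ≠ 1 then Finsupp.single ⟨(g, h), hp⟩ 1 else 0

/-- The `ℤ`-linear endomorphism of `Asymb G` induced by the formula
`g · ×_{h,k} = ×_{gh,k} − ×_{g,hk} + ×_{g,h}`. -/
noncomputable def actHom {G : Type*} [Group G] [DecidableEq G] (g : G) :
    Asymb G →ₗ[ℤ] Asymb G :=
  Finsupp.lift (Asymb G) ℤ {p : G × G // p.1 ≠ 1 ∧ p.2 ≠ 1} fun p =>
    X (g * p.1.1) p.1.2 - X g (p.1.1 * p.1.2) + X g p.1.1

/-!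
On generators, `g • (h • ×_{a,b})` expands to `×_{gha,b} − ×_{gh,ab} + ×_{gh,a}` (the terms
`×_{g,hab}`, `×_{g,ha}`, `×_{g,h}` cancel), which is `(gh) • ×_{a,b}`; and `1` acts trivially
because `×_{1,·} = 0`. So the formula is a monoid homomorphism `G →* End 𝒜`, i.e. a distributive
action, and a distributive action of a group is an action by additive automorphisms.
-/

namespace Asymb

variable {G : Type*} [Group G] [DecidableEq G]

@[simp]
lemma X_one_left (g : G) : X 1 g = 0 := by
  simp [X]

@[simp]
lemma X_one_right (g : G) : X g 1 = 0 := by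
  simp [X]

lemma single_eq_X {g h : G} (hg : g ≠ 1) (hh : h ≠ 1) :
    (Finsupp.single ⟨(g, h), hg, hh⟩ 1 : Asymb G) = X g h := by
  simp [X, hg, hh]

@[ext]
theorem linearMap_ext {M : Type*} [AddCommGroup M] {f f' : Asymb G →ₗ[ℤ] M}
    (hX : ∀ g h : G, f (X g h) = f' (X g h)) : f = f' := by
  apply Finsupp.lhom_ext'
  rintro ⟨⟨g, h⟩, hg, hh⟩
  apply LinearMap.ext_ring
  change f (Finsupp.single _ 1) = f' (Finsupp.single _ 1)
  rw [single_eq_X hg hh]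
  exact hX g h

theorem actHom_X (g h k : G) : actHom g (X h k) = X (g * h) k - X g (h * k) + X g h := by
  by_cases hhk : h ≠ 1 ∧ k ≠ 1
  · rw [← single_eq_X hhk.1 hhk.2]
    erw [Finsupp.lift_apply, Finsupp.sum_single_index] <;> simp
  · obtain rfl | rfl : h = 1 ∨ k = 1 := by tauto
    all_goals simp

theorem actHom_one : actHom (1 : G) = 1 := by
  ext g h
  simp [actHom_X]

theorem actHom_mul (g g' : G) : actHom (g * g') = actHom g * actHom g' := by
  ext h k
  simp only [Module.End.mul_apply, actHom_X, map_add, map_sub, mul_assoc]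
  abel

noncomputable def actMonoidHom : G →* Module.End ℤ (Asymb G) where
  toFun := actHom
  map_one' := actHom_one
  map_mul' := actHom_mul

end Asymb

/-- the formula `g · ×_{h,k} = ×_{gh,k} − ×_{g,hk} + ×_{g,h}` (extended
`ℤ`-linearly) defines an action of `G` on `𝒜` by additive automorphisms, i.e. there is a
group homomorphism `ρ : G →* AddAut 𝒜` realizing the formula on the generators. -/
theorem stmt5 {G : Type*} [Group G] [DecidableEq G] :
    ∃ ρ : G →* Multiplicative (AddAut (Asymb G)),
      ∀ g h k : G, Multiplicative.toAdd (ρ g) (X h k) = X (g * h) k - X g (h * k) + X g h := by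
  let _ := DistribMulAction.compHom (Asymb G) (Asymb.actMonoidHom (G := G))
  exact ⟨DistribMulAction.toAddAut G (Asymb G), Asymb.actHom_X⟩
end

section
/- Let G be a group acting on G-modules M and N, with G acting diagonally on M ⊗ N. For cochains α ∈ C^p(G;M), β ∈ C^q(G;N), define the cup product (α ∪ β)(g_1,…,g_{p+q}) = α(g_1,…,g_p) ⊗ (g_1⋯g_p)·β(g_{p+1},…,g_{p+q}). Then the Leibniz rule holds: δ(α ∪ β) = (δα) ∪ β + (−1)^p α ∪ (δβ). -/
open scoped TensorProduct

/-- The (Alexander–Whitney) cup product of cochains,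
`(α ∪ β)(g₁,…,g_{p+q}) = α(g₁,…,g_p) ⊗ (g₁⋯g_p)·β(g_{p+1},…,g_{p+q})`. -/
noncomputable def cup {G M N : Type*} [Group G] [AddCommGroup M] [AddCommGroup N]
    [DistribMulAction G M] [DistribMulAction G N] {p q : ℕ}
    (α : (Fin p → G) → M) (β : (Fin q → G) → N) : (Fin (p + q) → G) → M ⊗[ℤ] N :=
  fun g => α (fun i => g (Fin.castAdd q i)) ⊗ₜ[ℤ]
    ((List.ofFn fun i : Fin p => g (Fin.castAdd q i)).prod • β fun i => g (Fin.natAdd p i))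

/-- The diagonal action of `g : G` on `M ⊗ N`, `g·(m ⊗ n) = (g·m) ⊗ (g·n)`. -/
noncomputable def tensorAct {G M N : Type*} [Group G] [AddCommGroup M] [AddCommGroup N]
    [DistribMulAction G M] [DistribMulAction G N] (g : G) :
    M ⊗[ℤ] N → M ⊗[ℤ] N :=
  TensorProduct.map ((DistribMulAction.toAddMonoidHom M g).toIntLinearMap)
    ((DistribMulAction.toAddMonoidHom N g).toIntLinearMap)

lemma stmt8_prod_ofFn_contractNth {G : Type*} [Monoid G] :
    ∀ {n : ℕ} (j : Fin (n + 1)) (g : Fin (n + 1) → G), (j : ℕ) < n →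
      (List.ofFn (Fin.contractNth j (· * ·) g)).prod = (List.ofFn g).prod := by
  intro n
  induction n with
  | zero => intro j g h; omega
  | succ n ih =>
    intro j g hj
    rcases Fin.eq_zero_or_eq_succ j with rfl | ⟨j', rfl⟩
    · have h2 : (fun k : Fin n => Fin.contractNth (0 : Fin (n+2)) (· * ·) g k.succ)
          = fun k : Fin n => g k.succ.succ := by
        funext k
        rw [Fin.contractNth_apply_of_gt _ _ _ _ (by simp)]
      rw [List.ofFn_succ, List.ofFn_succ, List.ofFn_succ, h2, List.prod_cons,
        List.prod_cons, List.prod_cons, Fin.contractNth_apply_of_eq _ _ _ _ (by simp),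
        mul_assoc]
      simp
    · have h1 : Fin.contractNth j'.succ (· * ·) g 0 = g 0 := by
        rw [Fin.contractNth_apply_of_lt _ _ _ _ (by simp)]
        exact congrArg g (Fin.ext (by simp))
      have h2 : (fun k : Fin n => Fin.contractNth j'.succ (· * ·) g k.succ)
          = Fin.contractNth j' (· * ·) (fun i => g i.succ) := by
        funext k
        rcases lt_trichotomy (k : ℕ) (j' : ℕ) with h | h | h
        · rw [Fin.contractNth_apply_of_lt _ _ _ _ (by simpa using h),
            Fin.contractNth_apply_of_lt _ _ _ _ h]
          exact congrArg g (Fin.ext (by simp))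
        · rw [Fin.contractNth_apply_of_eq _ _ _ _ (by simpa using h),
            Fin.contractNth_apply_of_eq _ _ _ _ h]
          exact congrArg₂ (· * ·) (congrArg g (Fin.ext (by simp))) rfl
        · rw [Fin.contractNth_apply_of_gt _ _ _ _ (by simpa using h),
            Fin.contractNth_apply_of_gt _ _ _ _ h]
      rw [List.ofFn_succ, List.ofFn_succ, h1, h2, List.prod_cons, List.prod_cons,
        ih j' (fun i => g i.succ) (by simpa using hj)]

lemma stmt8_smul_zsmul {G N : Type*} [Group G] [AddCommGroup N] [DistribMulAction G N]
    (h : G) (z : ℤ) (x : N) : h • (z • x) = z • (h • x) :=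
  map_zsmul (DistribMulAction.toAddMonoidHom N h) z x

lemma stmt8_tensorAct_tmul {G M N : Type*} [Group G] [AddCommGroup M] [AddCommGroup N]
    [DistribMulAction G M] [DistribMulAction G N] (g : G) (m : M) (n : N) :
    tensorAct (M := M) (N := N) g (m ⊗ₜ[ℤ] n) = (g • m) ⊗ₜ[ℤ] (g • n) := by
  simp [tensorAct]

/-- the Leibniz rule `δ(α ∪ β) = (δα) ∪ β + (−1)^p α ∪ (δβ)` for the cup
product of cochains, with the diagonal `G`-action on `M ⊗ N`. -/
theorem stmt8 {G M N : Type*} [Group G] [AddCommGroup M] [AddCommGroup N]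
    [DistribMulAction G M] [DistribMulAction G N] (p q : ℕ)
    (α : (Fin p → G) → M) (β : (Fin q → G) → N) :
    ∀ g : Fin (p + q + 1) → G,
      dd (fun g x => tensorAct (M := M) (N := N) g x) (cup α β) g =
        cup (dd (fun (g : G) (m : M) => g • m) α) β
            (fun i => g (Fin.cast (by omega : p + 1 + q = p + q + 1) i)) +
        ((-1 : ℤ) ^ p) • cup α (dd (fun (g : G) (n : N) => g • n) β) g := by
  intro g
  have hc2 : p + (q + 1) = p + q + 1 := by omega
  set a : Fin p → G := fun i => g ⟨i.1 + 1, by omega⟩ with ha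
  set b : Fin q → G := fun i => g ⟨p + 1 + i.1, by omega⟩ with hb
  set A : Fin (p+1) → G := fun i => g ⟨i.1, by omega⟩ with hA
  set A' : Fin p → G := fun i => g ⟨i.1, by omega⟩ with hA'
  set B' : Fin (q+1) → G := fun i => g ⟨p + i.1, by omega⟩ with hB'
  set P : G := g 0 * (List.ofFn a).prod with hPdef
  set T0 : M ⊗[ℤ] N := (g 0 • α a) ⊗ₜ[ℤ] (P • β b) with hT0
  set Y : M ⊗[ℤ] N := α A' ⊗ₜ[ℤ] (P • β b) with hY
  set L : Fin p → M ⊗[ℤ] N := fun j => ((-1:ℤ)^(j.1+1)) •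
    (α (Fin.contractNth (Fin.castSucc j) (· * ·) A) ⊗ₜ[ℤ] (P • β b)) with hL
  set K : Fin (q+1) → M ⊗[ℤ] N := fun i => ((-1:ℤ)^(p+i.1+1)) •
    (α A' ⊗ₜ[ℤ] ((List.ofFn A').prod • β (Fin.contractNth i (· * ·) B'))) with hK
  have hP : (List.ofFn A).prod = P := by
    rw [hA, hPdef, ha, List.ofFn_succ, List.prod_cons]
    exact congrArg₂ (· * ·) (congrArg g (Fin.ext (by simp)))
      (congrArg List.prod (congrArg List.ofFn (funext fun i => congrArg g (Fin.ext (by simp)))))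
  have hPP : (List.ofFn A').prod * g ⟨p, by omega⟩ = P := by
    rw [← hP, hA, hA', List.ofFn_succ', List.concat_eq_append, List.prod_append, List.prod_cons,
      List.prod_nil, mul_one]
    exact congrArg₂ (· * ·)
      (congrArg List.prod (congrArg List.ofFn (funext fun i => congrArg g (Fin.ext (by simp)))))
      (congrArg g (Fin.ext (by simp)))
  have hLHS : dd (fun g x => tensorAct (M := M) (N := N) g x) (cup α β) g
      = T0 + (∑ j : Fin p, L j + ∑ i : Fin (q+1), K i) := by
    have hsplit : ∀ F : Fin (p+q+1) → M ⊗[ℤ] N,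
        ∑ j : Fin (p+q+1), F j
          = ∑ j : Fin p, F (Fin.cast hc2 (Fin.castAdd (q+1) j))
            + ∑ i : Fin (q+1), F (Fin.cast hc2 (Fin.natAdd p i)) := by
      intro F
      rw [← Fin.sum_congr' F hc2, Fin.sum_univ_add]
    simp only [dd]
    rw [hsplit]
    congr 1
    · -- action term = T0
      simp only [cup]
      have e1 : (fun i : Fin p => g (Fin.castAdd q i).succ) = a := by
        simp only [ha]; exact funext fun i => congrArg g (Fin.ext (by simp))
      have e2 : (fun i : Fin q => g (Fin.natAdd p i).succ) = b := by
        simp only [hb]; exact funext fun i => congrArg g (Fin.ext (by simp; omega))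
      rw [e1, e2, stmt8_tensorAct_tmul, hT0, hPdef, mul_smul]
    congr 1
    · refine Finset.sum_congr rfl fun j _ => ?_
      simp only [cup]
      have e1 : (fun i : Fin p =>
            Fin.contractNth (Fin.cast hc2 (Fin.castAdd (q+1) j)) (· * ·) g (Fin.castAdd q i))
          = Fin.contractNth (Fin.castSucc j) (· * ·) A := by
        funext i
        rcases lt_trichotomy (i : ℕ) (j : ℕ) with h | h | h
        · rw [Fin.contractNth_apply_of_lt _ _ _ _ (by simpa using h),
            Fin.contractNth_apply_of_lt _ _ _ _ (by simpa using h)]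
          simp only [hA]; exact congrArg g (Fin.ext (by simp))
        · rw [Fin.contractNth_apply_of_eq _ _ _ _ (by simpa using h),
            Fin.contractNth_apply_of_eq _ _ _ _ (by simpa using h)]
          simp only [hA]
          exact congrArg₂ (· * ·) (congrArg g (Fin.ext (by simp)))
            (congrArg g (Fin.ext (by simp)))
        · rw [Fin.contractNth_apply_of_gt _ _ _ _ (by simpa using h),
            Fin.contractNth_apply_of_gt _ _ _ _ (by simpa using h)]
          simp only [hA]; exact congrArg g (Fin.ext (by simp))
      have e2 : (fun i : Fin q =>
            Fin.contractNth (Fin.cast hc2 (Fin.castAdd (q+1) j)) (· * ·) g (Fin.natAdd p i)) = b := by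
        funext i
        rw [Fin.contractNth_apply_of_gt _ _ _ _
          (by simpa using lt_of_lt_of_le j.isLt (Nat.le_add_right _ _))]
        simp only [hb]; exact congrArg g (Fin.ext (by simp; omega))
      rw [e1, e2, stmt8_prod_ofFn_contractNth _ _ (by simpa using j.isLt), hP]
      simp only [hL, Fin.coe_cast, Fin.coe_castAdd]
    · refine Finset.sum_congr rfl fun i _ => ?_
      simp only [cup]
      have e1 : (fun k : Fin p =>
            Fin.contractNth (Fin.cast hc2 (Fin.natAdd p i)) (· * ·) g (Fin.castAdd q k)) = A' := by
        funext k
        rw [Fin.contractNth_apply_of_lt _ _ _ _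
          (by simpa using lt_of_lt_of_le k.isLt (Nat.le_add_right _ _))]
        simp only [hA']; exact congrArg g (Fin.ext (by simp))
      have e2 : (fun k : Fin q =>
            Fin.contractNth (Fin.cast hc2 (Fin.natAdd p i)) (· * ·) g (Fin.natAdd p k))
          = Fin.contractNth i (· * ·) B' := by
        funext k
        rcases lt_trichotomy (k : ℕ) (i : ℕ) with h | h | h
        · rw [Fin.contractNth_apply_of_lt _ _ _ _ (by simp; omega),
            Fin.contractNth_apply_of_lt _ _ _ _ h]
          simp only [hB']; exact congrArg g (Fin.ext (by simp))
        · rw [Fin.contractNth_apply_of_eq _ _ _ _ (by simp; omega),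
            Fin.contractNth_apply_of_eq _ _ _ _ h]
          simp only [hB']
          exact congrArg₂ (· * ·) (congrArg g (Fin.ext (by simp)))
            (congrArg g (Fin.ext (by simp; omega)))
        · rw [Fin.contractNth_apply_of_gt _ _ _ _ (by simp; omega),
            Fin.contractNth_apply_of_gt _ _ _ _ h]
          simp only [hB']; exact congrArg g (Fin.ext (by simp; omega))
      rw [e1, e2]
      simp only [hK, Fin.coe_cast, Fin.coe_natAdd]
  have hR1 : cup (dd (fun (g : G) (m : M) => g • m) α) β
        (fun i => g (Fin.cast (by omega : p + 1 + q = p + q + 1) i))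
      = T0 + (∑ j : Fin p, L j + -(((-1:ℤ)^p) • Y)) := by
    simp only [cup, dd]
    have eA : (fun i : Fin (p+1) =>
        g (Fin.cast (by omega : p + 1 + q = p + q + 1) (Fin.castAdd q i))) = A := by
      simp only [hA]; exact funext fun i => congrArg g (Fin.ext (by simp))
    have eb : (fun i : Fin q =>
        g (Fin.cast (by omega : p + 1 + q = p + q + 1) (Fin.natAdd (p+1) i))) = b := by
      simp only [hb]; exact funext fun i => congrArg g (Fin.ext (by simp))
    rw [eA, eb, hP]
    have hA0 : g (Fin.cast (by omega : p + 1 + q = p + q + 1) (Fin.castAdd q 0)) = g 0 :=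
      congrArg g (Fin.ext (by simp))
    have hAs : (fun i : Fin p =>
        g (Fin.cast (by omega : p + 1 + q = p + q + 1) (Fin.castAdd q i.succ))) = a := by
      simp only [ha]; exact funext fun i => congrArg g (Fin.ext (by simp))
    have hlast : Fin.contractNth (Fin.last p) (· * ·) A = A' := by
      funext k
      rw [Fin.contractNth_apply_of_lt _ _ _ _ (by simpa using k.isLt)]
      simp only [hA, hA']
      exact congrArg g (Fin.ext (by simp))
    rw [hA0, hAs, TensorProduct.add_tmul, TensorProduct.sum_tmul, Fin.sum_univ_castSucc, hlast]
    simp only [← TensorProduct.smul_tmul', Fin.coe_castSucc, Fin.val_last]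
    simp only [hT0, hY, hL]
    rw [show ((-1:ℤ))^(p+1) • (α A' ⊗ₜ[ℤ] (P • β b)) = -(((-1:ℤ)^p) • (α A' ⊗ₜ[ℤ] (P • β b)))
      by rw [pow_succ, mul_neg_one, neg_smul]]
    rfl
  have hR2 : ((-1 : ℤ) ^ p) • cup α (dd (fun (g : G) (n : N) => g • n) β) g
      = ((-1:ℤ)^p) • Y + ∑ i : Fin (q+1), K i := by
    simp only [cup, dd]
    have eA : (fun i : Fin p => g (Fin.castAdd (q+1) i)) = A' := by
      simp only [hA']; exact funext fun i => congrArg g (Fin.ext (by simp))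
    have eB : (fun i : Fin (q+1) => g (Fin.natAdd p i)) = B' := by
      simp only [hB']; exact funext fun i => congrArg g (Fin.ext (by simp))
    have e0 : g (Fin.natAdd p (0 : Fin (q+1))) = g ⟨p, by omega⟩ :=
      congrArg g (Fin.ext (by simp))
    have es : (fun i : Fin q => g (Fin.natAdd p i.succ)) = b := by
      simp only [hb]; exact funext fun i => congrArg g (Fin.ext (by simp; omega))
    rw [eA, eB, e0, es]
    rw [smul_add, Finset.smul_sum]
    simp only [stmt8_smul_zsmul]
    rw [smul_smul, hPP]
    rw [TensorProduct.tmul_add, TensorProduct.tmul_sum]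
    simp only [TensorProduct.tmul_smul]
    rw [smul_add, Finset.smul_sum]
    simp only [smul_smul, hY, hK]
    congr 1
    refine Finset.sum_congr rfl fun i _ => ?_
    rw [← pow_add, Nat.add_assoc]
  rw [hLHS, hR1, hR2]
  abel
end
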